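/- Let Δ_N be the bi-invariant Laplacian on U(N) with the scaled metric. For positive integers k, l, the cross term in the product rule satisfies: Δ_N(U^k · tr(U^l)) = Δ_N(U^k)·tr(U^l) + U^k·Δ_N(tr(U^l)) - (2kl/N²)·U^{k+l}. -/

import Mathlib

open Matrix MeasureTheory
open scoped BigOperators

/-- The normalized trace `tr(A) = (1/N) Trace(A)`. -/
noncomputable def ntr {N : ℕ} (A : Matrix (Fin N) (Fin N) ℂ) : ℂ :=
  (N : ℂ)⁻¹ * Matrix.trace A

/-- `X` is skew-Hermitian, i.e. an element of the Lie algebra `u(N)`. -/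
def IsSkewHerm {N : ℕ} (X : Matrix (Fin N) (Fin N) ℂ) : Prop := Xᴴ = -X

/-- `X : ι → u(N)` is an orthonormal basis of the real vector space `u(N)` of
skew-Hermitian matrices with respect to the inner product `⟨X,Y⟩_N = N·Re Trace(XᴴY)`:
each `X i` is skew-Hermitian, the family is orthonormal, and every skew-Hermitian
matrix is the sum of its components along the `X i`. -/
def IsONB {N : ℕ} {ι : Type} [Fintype ι] [DecidableEq ι] (X : ι → Matrix (Fin N) (Fin N) ℂ) : Prop :=
  (∀ i, IsSkewHerm (X i)) ∧
  (∀ i j, (N : ℝ) * (Matrix.trace ((X i)ᴴ * X j)).re = if i = j then 1 else 0) ∧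
  (∀ A : Matrix (Fin N) (Fin N) ℂ, IsSkewHerm A →
    A = ∑ i, ((N : ℝ) * (Matrix.trace ((X i)ᴴ * A)).re) • X i)

/-- The bi-invariant Laplacian `Δ_N = Σ_i ∂_{X_i}²` on scalar functions, where
`(∂_X f)(U) = d/ds|₀ f(U e^{sX})`, for the orthonormal basis `X` of `u(N)`. -/
noncomputable def lap {N : ℕ} {ι : Type} [Fintype ι] (X : ι → Matrix (Fin N) (Fin N) ℂ)
    (f : Matrix (Fin N) (Fin N) ℂ → ℂ) (U : Matrix (Fin N) (Fin N) ℂ) : ℂ :=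
  ∑ i, iteratedDeriv 2 (fun s : ℝ => f (U * NormedSpace.exp (s • X i))) 0

/-- The Laplacian `Δ_N` acting entrywise on matrix-valued functions. -/
noncomputable def mlap {N : ℕ} {ι : Type} [Fintype ι] (X : ι → Matrix (Fin N) (Fin N) ℂ)
    (f : Matrix (Fin N) (Fin N) ℂ → Matrix (Fin N) (Fin N) ℂ)
    (U : Matrix (Fin N) (Fin N) ℂ) : Matrix (Fin N) (Fin N) ℂ :=
  Matrix.of fun j k => lap X (fun V => f V j k) U

/-!
Along the curve `s ↦ U e^{sX}` the Leibniz rule gives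
`Δ(fg) = Δf·g + 2 Σᵢ ∂ᵢf ∂ᵢg + f·Δg`. For `f = tr(V^l)` and `g = V^k` the first derivatives at
`s = 0` are `(l/N) tr(U^l Xᵢ)` and `Σ_{a+b=k-1} U^a (U Xᵢ) U^b`, and the Casimir identity
`Σᵢ Trace(Xᵢ M) Xᵢ = -(1/N) M` of an orthonormal basis of `u(N)` (extended complex-linearly from
`u(N)` to all matrices) collapses the cross term `2 Σᵢ ∂ᵢf ∂ᵢg` to `-(2kl/N²) U^{k+l}`.
-/

open NormedSpace Finset

section PowDeriv

variable {R : Type*} [Ring R]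

def powDeriv (n : ℕ) (U H : R) : R :=
  ∑ i ∈ range n, U ^ (n - 1 - i) * H * U ^ i

theorem powDeriv_sum {ι : Type*} (s : Finset ι) (n : ℕ) (U : R) (H : ι → R) :
    powDeriv n U (∑ x ∈ s, H x) = ∑ x ∈ s, powDeriv n U (H x) := by
  simp only [powDeriv, mul_sum, sum_mul]
  exact sum_comm

theorem powDeriv_smul {S : Type*} [CommSemiring S] [Algebra S R] (n : ℕ) (U : R) (c : S) (H : R) :
    powDeriv n U (c • H) = c • powDeriv n U H := by
  simp only [powDeriv, mul_smul_comm, smul_mul_assoc, smul_sum]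

theorem powDeriv_mul_pow (n m : ℕ) (U : R) : powDeriv n U (U * U ^ m) = n • U ^ (n + m) := by
  calc powDeriv n U (U * U ^ m) = ∑ _i ∈ range n, U ^ (n + m) := by
        refine sum_congr rfl fun i hi => ?_
        rw [← pow_succ', ← pow_add, ← pow_add]
        congr 1
        have := mem_range.mp hi
        omega
    _ = n • U ^ (n + m) := by rw [sum_const, card_range]

end PowDeriv

theorem trace_powDeriv_mul {m S : Type*} [Fintype m] [DecidableEq m] [CommRing S] (n : ℕ)
    (U H : Matrix m m S) : (powDeriv n U (U * H)).trace = n * (U ^ n * H).trace := by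
  calc (powDeriv n U (U * H)).trace = ∑ _i ∈ range n, (U ^ n * H).trace := by
        rw [powDeriv, trace_sum]
        refine sum_congr rfl fun i hi => ?_
        rw [trace_mul_comm, ← mul_assoc, ← mul_assoc, ← pow_add, ← pow_succ]
        congr 3
        have := mem_range.mp hi
        omega
    _ = n * (U ^ n * H).trace := by rw [sum_const, card_range, nsmul_eq_mul]

theorem iteratedDeriv_two_fun_mul {𝕜 𝔸 : Type*} [NontriviallyNormedField 𝕜] [NormedRing 𝔸]
    [NormedAlgebra 𝕜 𝔸] {f g : 𝕜 → 𝔸} {x : 𝕜} (hf : ContDiffAt 𝕜 2 f x)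
    (hg : ContDiffAt 𝕜 2 g x) :
    iteratedDeriv 2 (fun y => f y * g y) x
      = iteratedDeriv 2 f x * g x + 2 * (deriv f x * deriv g x) + f x * iteratedDeriv 2 g x := by
  rw [iteratedDeriv_fun_mul hf hg]
  simp only [sum_range_succ, range_one, sum_singleton, Nat.choose_zero_right,
    Nat.choose_succ_self_right, Nat.choose_self, Nat.cast_one, Nat.cast_ofNat, one_mul,
    iteratedDeriv_zero, iteratedDeriv_one, Nat.reduceAdd, Nat.reduceSub, mul_assoc]
  abel

section NormedAlgebra

variable {𝔸 : Type*} [NormedRing 𝔸] [NormedAlgebra ℝ 𝔸]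

theorem contDiff_clm_comp_pow {F : Type*} [NormedAddCommGroup F] [NormedSpace ℝ F]
    (L : 𝔸 →L[ℝ] F) (n : ℕ) {m : WithTop ℕ∞} : ContDiff ℝ m (fun V => L (V ^ n)) :=
  L.contDiff.comp (contDiff_id.pow n)

theorem fderiv_clm_comp_pow {F : Type*} [NormedAddCommGroup F] [NormedSpace ℝ F]
    (L : 𝔸 →L[ℝ] F) (n : ℕ) (U H : 𝔸) :
    fderiv ℝ (fun V => L (V ^ n)) U H = L (powDeriv n U H) := by
  have h : HasFDerivAt (fun V => L (V ^ n)) _ U := L.hasFDerivAt.comp U (hasFDerivAt_pow' n)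
  rw [h.fderiv]
  simp [powDeriv]

variable [CompleteSpace 𝔸]

theorem contDiff_mul_exp_smul (U X : 𝔸) {n : WithTop ℕ∞} :
    ContDiff ℝ n (fun s : ℝ => U * exp (s • X)) :=
  contDiff_const.mul <| contDiff_iff_contDiffAt.mpr fun s =>
    (exp_analytic (𝕂 := ℝ) (s • X)).contDiffAt.comp s (contDiffAt_id.smul contDiffAt_const)

theorem hasDerivAt_mul_exp_smul_zero (U X : 𝔸) :
    HasDerivAt (fun s : ℝ => U * exp (s • X)) (U * X) 0 := by
  simpa [mul_assoc] using (hasDerivAt_exp_smul_const (𝕂 := ℝ) X 0).const_mul U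

theorem deriv_comp_mul_exp_smul_zero {F : Type*} [NormedAddCommGroup F] [NormedSpace ℝ F]
    {f : 𝔸 → F} {U : 𝔸} (hf : DifferentiableAt ℝ f U) (X : 𝔸) :
    deriv (fun s : ℝ => f (U * exp (s • X))) 0 = fderiv ℝ f U (U * X) :=
  (hf.hasFDerivAt.comp_hasDerivAt_of_eq 0 (hasDerivAt_mul_exp_smul_zero U X) (by simp)).deriv

theorem iteratedDeriv_two_mul_comp_mul_exp_smul {𝔹 : Type*} [NormedRing 𝔹] [NormedAlgebra ℝ 𝔹]
    {f g : 𝔸 → 𝔹} (hf : ContDiff ℝ 2 f) (hg : ContDiff ℝ 2 g) (U X : 𝔸) :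
    iteratedDeriv 2 (fun s : ℝ => f (U * exp (s • X)) * g (U * exp (s • X))) 0
      = iteratedDeriv 2 (fun s : ℝ => f (U * exp (s • X))) 0 * g U
        + 2 * (fderiv ℝ f U (U * X) * fderiv ℝ g U (U * X))
        + f U * iteratedDeriv 2 (fun s : ℝ => g (U * exp (s • X))) 0 := by
  have hfγ : ContDiff ℝ 2 fun s : ℝ => f (U * exp (s • X)) := hf.comp (contDiff_mul_exp_smul ..)
  have hgγ : ContDiff ℝ 2 fun s : ℝ => g (U * exp (s • X)) := hg.comp (contDiff_mul_exp_smul ..)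
  rw [iteratedDeriv_two_fun_mul hfγ.contDiffAt hgγ.contDiffAt,
    deriv_comp_mul_exp_smul_zero (hf.differentiable two_ne_zero U),
    deriv_comp_mul_exp_smul_zero (hg.differentiable two_ne_zero U)]
  simp

end NormedAlgebra

theorem lap_ntr_pow_mul_pow_apply {N : ℕ} {ι : Type} [Fintype ι]
    (X : ι → Matrix (Fin N) (Fin N) ℂ) (k l : ℕ) (U : Matrix (Fin N) (Fin N) ℂ) (j r : Fin N) :
    lap X (fun V => ntr (V ^ l) * (V ^ k) j r) U
      = lap X (fun V => ntr (V ^ l)) U * (U ^ k) j r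
        + 2 * ∑ i, ntr (powDeriv l U (U * X i)) * powDeriv k U (U * X i) j r
        + ntr (U ^ l) * lap X (fun V => (V ^ k) j r) U := by
  let : NormedRing (Matrix (Fin N) (Fin N) ℂ) := Matrix.linftyOpNormedRing
  let : NormedAlgebra ℝ (Matrix (Fin N) (Fin N) ℂ) := Matrix.linftyOpNormedAlgebra
  let ntrCLM : Matrix (Fin N) (Fin N) ℂ →L[ℝ] ℂ :=
    ((N : ℂ)⁻¹ • Matrix.traceLinearMap (Fin N) ℝ ℂ).toContinuousLinearMap
  let entryCLM : Matrix (Fin N) (Fin N) ℂ →L[ℝ] ℂ :=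
    (Matrix.entryLinearMap ℝ ℂ j r).toContinuousLinearMap
  simp only [lap, sum_mul, mul_sum, ← sum_add_distrib]
  refine sum_congr rfl fun i _ => ?_
  have h := iteratedDeriv_two_mul_comp_mul_exp_smul (contDiff_clm_comp_pow ntrCLM l)
    (contDiff_clm_comp_pow entryCLM k) U (X i)
  rw [fderiv_clm_comp_pow ntrCLM l U (U * X i), fderiv_clm_comp_pow entryCLM k U (U * X i)] at h
  -- `h` and the goal differ only in the norm put on matrices and in unfolding the two CLMs
  exact h

section Casimir

variable {N : ℕ}

theorem IsSkewHerm.ofReal_re_trace_mul {A B : Matrix (Fin N) (Fin N) ℂ} (hA : IsSkewHerm A)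
    (hB : IsSkewHerm B) : ((A * B).trace.re : ℂ) = (A * B).trace := by
  refine Complex.conj_eq_iff_re.mp ?_
  calc starRingEnd ℂ (A * B).trace = ((A * B)ᴴ).trace := (trace_conjTranspose _).symm
    _ = (A * B).trace := by rw [conjTranspose_mul, hA, hB, neg_mul_neg, trace_mul_comm]

theorem exists_isSkewHerm_add_I_smul (M : Matrix (Fin N) (Fin N) ℂ) :
    ∃ A B, IsSkewHerm A ∧ IsSkewHerm B ∧ M = A + Complex.I • B := by
  refine ⟨(2 : ℂ)⁻¹ • (M - Mᴴ), (-Complex.I / 2) • (M + Mᴴ), ?_, ?_, ?_⟩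
  · simp [IsSkewHerm, conjTranspose_smul, smul_sub]
  · simp [IsSkewHerm, conjTranspose_smul, div_eq_mul_inv, add_comm]
  · have hI : Complex.I * (-Complex.I / 2) = 2⁻¹ := by field_simp; simp
    rw [smul_smul, hI]
    module

variable {ι : Type} [Fintype ι] [DecidableEq ι] {X : ι → Matrix (Fin N) (Fin N) ℂ}

theorem IsONB.sum_trace_mul_smul_of_isSkewHerm (hX : IsONB X) {A : Matrix (Fin N) (Fin N) ℂ}
    (hA : IsSkewHerm A) : ∑ i, (X i * A).trace • X i = -(N : ℂ)⁻¹ • A := by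
  rcases N.eq_zero_or_pos with rfl | hN
  · exact Subsingleton.elim _ _
  have hcoef : ∀ i, ((N : ℝ) * ((X i)ᴴ * A).trace.re) • X i
      = -(N : ℂ) • ((X i * A).trace • X i) := by
    intro i
    rw [hX.1 i, neg_mul, trace_neg, Complex.neg_re, ← Complex.coe_smul, smul_smul]
    push_cast
    rw [(hX.1 i).ofReal_re_trace_mul hA]
    ring_nf
  have hA' : A = -(N : ℂ) • ∑ i, (X i * A).trace • X i := by
    rw [smul_sum, ← sum_congr rfl fun i _ => hcoef i]
    exact hX.2.2 A hA
  conv_rhs => rw [hA']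
  rw [smul_smul, neg_mul_neg, inv_mul_cancel₀ (by exact_mod_cast hN.ne'), one_smul]

theorem IsONB.sum_trace_mul_smul (hX : IsONB X) (M : Matrix (Fin N) (Fin N) ℂ) :
    ∑ i, (X i * M).trace • X i = -(N : ℂ)⁻¹ • M := by
  obtain ⟨A, B, hA, hB, rfl⟩ := exists_isSkewHerm_add_I_smul M
  simp only [mul_add, mul_smul_comm, trace_add, trace_smul, add_smul, smul_eq_mul, mul_smul,
    sum_add_distrib, ← smul_sum, hX.sum_trace_mul_smul_of_isSkewHerm hA,
    hX.sum_trace_mul_smul_of_isSkewHerm hB]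
  rw [smul_add, smul_comm]

end Casimir

theorem IsONB.sum_ntr_powDeriv_smul_powDeriv {N : ℕ} {ι : Type} [Fintype ι] [DecidableEq ι]
    {X : ι → Matrix (Fin N) (Fin N) ℂ} (hX : IsONB X) (U : Matrix (Fin N) (Fin N) ℂ) (k l : ℕ) :
    ∑ i, ntr (powDeriv l U (U * X i)) • powDeriv k U (U * X i)
      = -((k * l : ℂ) / N ^ 2) • U ^ (k + l) := by
  calc ∑ i, ntr (powDeriv l U (U * X i)) • powDeriv k U (U * X i)
      = ((N : ℂ)⁻¹ * l) • powDeriv k U (U * ∑ i, (X i * U ^ l).trace • X i) := by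
        simp only [ntr, trace_powDeriv_mul, mul_sum, mul_smul_comm, powDeriv_sum, powDeriv_smul,
          smul_sum, smul_smul, trace_mul_comm (U ^ l), mul_assoc]
    _ = ((N : ℂ)⁻¹ * l) • powDeriv k U (U * (-(N : ℂ)⁻¹ • U ^ l)) := by
        rw [hX.sum_trace_mul_smul]
    _ = -((k * l : ℂ) / N ^ 2) • U ^ (k + l) := by
        rw [mul_smul_comm, powDeriv_smul, powDeriv_mul_pow, smul_smul, ← Nat.cast_smul_eq_nsmul ℂ,
          smul_smul]
        congr 1
        ring

theorem laplacian_product_cross_term_general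
    (N : ℕ) (ι : Type) [Fintype ι] [DecidableEq ι]
    (X : ι → Matrix (Fin N) (Fin N) ℂ) (hX : IsONB X)
    (k l : ℕ) (U : Matrix (Fin N) (Fin N) ℂ) :
    mlap X (fun V => ntr (V ^ l) • V ^ k) U
      = ntr (U ^ l) • mlap X (fun V => V ^ k) U
        + lap X (fun V => ntr (V ^ l)) U • U ^ k
        - ((2 * k * l : ℂ) / (N : ℂ) ^ 2) • U ^ (k + l) := by
  ext j r
  have hcross := congrFun₂ (hX.sum_ntr_powDeriv_smul_powDeriv U k l) j r
  simp only [Matrix.sum_apply, Matrix.smul_apply, smul_eq_mul] at hcross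
  simp only [mlap, of_apply, Matrix.add_apply, Matrix.sub_apply, Matrix.smul_apply, smul_eq_mul,
    lap_ntr_pow_mul_pow_apply, hcross]
  ring

/-- the product rule with explicit cross term:
`Δ_N(U^k tr(U^l)) = Δ_N(U^k) tr(U^l) + U^k Δ_N(tr(U^l)) - (2kl/N²) U^(k+l)`. -/
theorem laplacian_product_cross_term
    (N : ℕ) (hN : 0 < N) (ι : Type) [Fintype ι] [DecidableEq ι]
    (X : ι → Matrix (Fin N) (Fin N) ℂ) (hX : IsONB X)
    (k l : ℕ) (hk : 0 < k) (hl : 0 < l) (U : Matrix (Fin N) (Fin N) ℂ)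
    (hU : U ∈ Matrix.unitaryGroup (Fin N) ℂ) :
    mlap X (fun V => ntr (V ^ l) • V ^ k) U
      = ntr (U ^ l) • mlap X (fun V => V ^ k) U
        + lap X (fun V => ntr (V ^ l)) U • U ^ k
        - ((2 * k * l : ℂ) / (N : ℂ) ^ 2) • U ^ (k + l) :=
  laplacian_product_cross_term_general N ι X hX k l U
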